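/- arXiv:1808.09387 — 3 statements merged into one kernel-verified Lean document; each statement's English description precedes it below -/
import Mathlib

section
/- No shortest path graph contains K₄ minus an edge as an induced subgraph. That is, if H = S(G,a,b) is a shortest path graph, then H has no induced subgraph isomorphic to the graph on four vertices with five edges. -/
open SimpleGraph

variable {V : Type*}

/-- An `(a,b)`-geodesic in `G`: a shortest path from `a` to `b`. -/
def Geodesic (G : SimpleGraph V) (a b : V) : Type _ :=
  {p : G.Walk a b // p.IsPath ∧ p.length = G.dist a b}

/-- The set of index levels at which two geodesics differ
(position `i` in the support list is index level `i`; position `0` is `a`). -/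
def diffIndices (G : SimpleGraph V) (a b : V) (U W : Geodesic G a b) : Set ℕ :=
  {i | U.1.support[i]? ≠ W.1.support[i]?}

/-- The shortest path graph `S(G,a,b)`: vertices are the `(a,b)`-geodesics,
two geodesics being adjacent iff they differ at exactly one index level. -/
def SPG (G : SimpleGraph V) (a b : V) : SimpleGraph (Geodesic G a b) where
  Adj U W := ∃! i, i ∈ diffIndices G a b U W
  symm := by
    constructor
    rintro U W ⟨i, hi, hu⟩
    exact ⟨i, Ne.symm hi, fun j hj => hu j (Ne.symm hj)⟩
  loopless := by
    constructor
    rintro U ⟨i, hi, -⟩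
    exact hi rfl

/-!
A geodesic is determined by its sequence of vertices `i ↦ support[i]?`, and two geodesics are
adjacent in `S(G,a,b)` exactly when these sequences differ in one coordinate. So `S(G,a,b)` is
an induced subgraph of the Hamming graph on `ℕ → Option V`, and it suffices to show that Hamming
graphs contain no induced `K₄ - e`.

There, two nonadjacent distinct vertices `x, y` with a common neighbour differ in exactly two
coordinates `i ≠ j`, and every common neighbour is `x` with its `i`-th or its `j`-th coordinate
replaced by that of `y`. Two distinct common neighbours are therefore these two, which differ in
both coordinates `i` and `j`, hence are not adjacent.
-/

def hammingGraph (ι β : Type*) : SimpleGraph (ι → β) where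
  Adj f g := ∃! i, f i ≠ g i
  symm := ⟨fun _ _ ⟨i, hi, hu⟩ => ⟨i, Ne.symm hi, fun j hj => hu j (Ne.symm hj)⟩⟩
  loopless := ⟨fun _ ⟨_, hi, _⟩ => hi rfl⟩

namespace hammingGraph

variable {ι β : Type*} {x y z : ι → β}

lemma eq_of_adj_of_ne {i : ι} (h : (hammingGraph ι β).Adj x y) (hi : x i ≠ y i) :
    ∀ ⦃t⦄, t ≠ i → x t = y t := by
  obtain ⟨k, -, hk⟩ := h
  intro t ht
  by_contra hne
  exact ht ((hk t hne).trans (hk i hi).symm)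

lemma eq_or_adj_of_eqOn_ne {i : ι} (h : ∀ t, t ≠ i → x t = y t) :
    x = y ∨ (hammingGraph ι β).Adj x y := by
  by_cases hi : x i = y i
  · refine .inl (funext fun t => ?_)
    rcases eq_or_ne t i with rfl | ht
    exacts [hi, h t ht]
  · exact .inr ⟨i, hi, fun t hne => by_contra fun ht => hne (h t ht)⟩

lemma eq_update_of_adj_of_adj [DecidableEq ι] (hxy : x ≠ y) (hnadj : ¬(hammingGraph ι β).Adj x y)
    (hxz : (hammingGraph ι β).Adj x z) (hyz : (hammingGraph ι β).Adj y z) :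
    ∃ i, x i ≠ y i ∧ z = Function.update x i (y i) := by
  obtain ⟨i, hi⟩ := hxz.exists
  obtain ⟨j, hj⟩ := hyz.exists
  replace hxz := eq_of_adj_of_ne hxz hi
  replace hyz := eq_of_adj_of_ne hyz hj
  have hij : i ≠ j := by
    rintro rfl
    exact (eq_or_adj_of_eqOn_ne fun t ht => (hxz ht).trans (hyz ht).symm).elim hxy hnadj
  have hzi : z i = y i := (hyz hij).symm
  refine ⟨i, hzi ▸ hi, funext fun t => ?_⟩
  rcases eq_or_ne t i with rfl | ht
  · simpa using hzi
  · simpa [ht] using (hxz ht).symm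

lemma not_adj_update_update [DecidableEq ι] {i j : ι} (hij : i ≠ j) (hi : x i ≠ y i)
    (hj : x j ≠ y j) :
    ¬(hammingGraph ι β).Adj (Function.update x i (y i)) (Function.update x j (y j)) := by
  rintro ⟨k, -, hk⟩
  refine hij ((hk i ?_).trans (hk j ?_).symm)
  · simpa [hij] using hi.symm
  · simpa [hij.symm] using hj

theorem isEmpty_diamond_embedding :
    IsEmpty ((completeGraph (Fin 4)).deleteEdges {s(0, 1)} ↪g hammingGraph ι β) := by
  classical
  refine ⟨fun f => ?_⟩
  have adj : ∀ u v : Fin 4, u ≠ v → s(u, v) ≠ s(0, 1) → (hammingGraph ι β).Adj (f u) (f v) :=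
    fun u v huv he => f.map_adj_iff.mpr ((deleteEdges_adj ..).mpr ⟨huv, he⟩)
  have hnadj : ¬(hammingGraph ι β).Adj (f 0) (f 1) :=
    fun h => ((deleteEdges_adj ..).mp (f.map_adj_iff.mp h)).2 rfl
  have hne : f 0 ≠ f 1 := fun h => by simpa using f.injective h
  obtain ⟨i, hi, hz⟩ := eq_update_of_adj_of_adj hne hnadj (adj 0 2 (by decide) (by decide))
    (adj 1 2 (by decide) (by decide))
  obtain ⟨j, hj, hw⟩ := eq_update_of_adj_of_adj hne hnadj (adj 0 3 (by decide) (by decide))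
    (adj 1 3 (by decide) (by decide))
  have hij : i ≠ j := by
    rintro rfl
    exact absurd (f.injective (hz.trans hw.symm)) (by decide)
  exact not_adj_update_update hij hi hj (hz ▸ hw ▸ adj 2 3 (by decide) (by decide))

end hammingGraph

def SPG.embeddingHammingGraph (G : SimpleGraph V) (a b : V) :
    SPG G a b ↪g hammingGraph ℕ (Option V) where
  toFun U i := U.1.support[i]?
  inj' _ _ h := Subtype.ext (Walk.ext_support (List.ext_getElem? (congrFun h)))
  map_rel_iff' := Iff.rfl

theorem stmt_1_general {V : Type*} (G : SimpleGraph V) (a b : V) :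
    IsEmpty (((completeGraph (Fin 4)).deleteEdges {s(0, 1)}) ↪g SPG G a b) :=
  ⟨fun f => hammingGraph.isEmpty_diamond_embedding.false
    (f.trans (SPG.embeddingHammingGraph G a b))⟩

/-- shortest path graphs are `K₄ - e`-free. -/
theorem stmt_1 {V : Type*} (G : SimpleGraph V) (a b : V) (hab : a ≠ b) :
    IsEmpty (((completeGraph (Fin 4)).deleteEdges {s(0, 1)}) ↪g SPG G a b) :=
  stmt_1_general G a b
end

section
/- No shortest path graph contains the complete bipartite graph K_{2,3} as an induced subgraph. -/
open SimpleGraph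

variable {V : Type*}

/-!
Distinct geodesics differ at some index, and the difference sets satisfy a triangle inequality
`D(X,Y) ⊆ D(X,Z) ∪ D(Z,Y)`. Hence if `Z` is a common neighbour of two non-adjacent geodesics `X, Y`,
then `D(X,Y)` consists of exactly the two distinct indices of the edges `XZ` and `ZY`.

In an induced `K_{2,3}` with parts `{u₀, u₁}` and `{w₀, w₁, w₂}`, let `xₖ` be the index of the edge
`u₀wₖ`. Applied to `wₖ, wₗ` through `u₀`, this shows the `xₖ` are pairwise distinct; applied to
`u₀, u₁` through `wₖ`, it shows every `xₖ` lies in the two-element set `D(u₀,u₁)`. Contradiction.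
-/

namespace SPG

variable {G : SimpleGraph V} {a b : V} {X Y Z : Geodesic G a b}

lemma diffIndices_comm : diffIndices G a b X Y = diffIndices G a b Y X :=
  Set.ext fun _ => ne_comm

lemma diffIndices_nonempty (h : X ≠ Y) : (diffIndices G a b X Y).Nonempty := by
  by_contra hc
  refine h (Subtype.ext (Walk.ext_support (List.ext_getElem? fun i => ?_)))
  by_contra hi
  exact hc ⟨i, hi⟩

lemma diffIndices_subset_union :
    diffIndices G a b X Y ⊆ diffIndices G a b X Z ∪ diffIndices G a b Z Y := by
  intro i hi
  by_contra hc
  simp only [Set.mem_union, diffIndices, Set.mem_ofPred_eq, not_or, not_not] at hc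
  exact hi (hc.1.trans hc.2)

lemma adj_iff : (SPG G a b).Adj X Y ↔ ∃ i, diffIndices G a b X Y = {i} := by
  simp only [SPG, ExistsUnique, Set.eq_singleton_iff_unique_mem]

lemma diffIndices_eq_pair_of_common_neighbor (hne : X ≠ Y) (hnadj : ¬(SPG G a b).Adj X Y)
    {r s : ℕ} (hXZ : diffIndices G a b X Z = {r}) (hZY : diffIndices G a b Z Y = {s}) :
    r ≠ s ∧ diffIndices G a b X Y = {r, s} := by
  have hsub : diffIndices G a b X Y ⊆ {r, s} := by
    simpa only [hXZ, hZY, Set.singleton_union] using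
      diffIndices_subset_union (X := X) (Y := Y) (Z := Z)
  have hmem : ∀ t, diffIndices G a b X Y ⊆ {t} → False := fun t ht =>
    hnadj (adj_iff.2 ⟨t, (diffIndices_nonempty hne).subset_singleton_iff.1 ht⟩)
  refine ⟨fun hrs => hmem r (by simpa [hrs] using hsub), hsub.antisymm ?_⟩
  rintro t (rfl | rfl)
  · by_contra ht
    exact hmem s fun i hi => (hsub hi).resolve_left (by rintro rfl; exact ht hi)
  · by_contra ht
    exact hmem r fun i hi => (hsub hi).resolve_right (by rintro rfl; exact ht hi)

end SPG

open SPG in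
theorem stmt_5_general {V : Type*} (G : SimpleGraph V) (a b : V) :
    IsEmpty (completeBipartiteGraph (Fin 2) (Fin 3) ↪g SPG G a b) := by
  refine ⟨fun f => ?_⟩
  set u : Fin 2 → Geodesic G a b := fun j => f (Sum.inl j)
  set w : Fin 3 → Geodesic G a b := fun k => f (Sum.inr k)
  have hu_ne : u 0 ≠ u 1 := by simp [u]
  have hu_nadj : ¬(SPG G a b).Adj (u 0) (u 1) := by simp [u]
  have hw_ne {k l} (hkl : k ≠ l) : w k ≠ w l := by simpa [w] using hkl
  have hw_nadj k l : ¬(SPG G a b).Adj (w k) (w l) := by simp [w]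
  have huw j k : (SPG G a b).Adj (u j) (w k) := by simp [u, w]
  choose x hx using fun k => adj_iff.1 (huw 0 k)
  choose y hy using fun k => adj_iff.1 (huw 1 k).symm
  have hD k : diffIndices G a b (u 0) (u 1) = {x k, y k} :=
    (diffIndices_eq_pair_of_common_neighbor hu_ne hu_nadj (hx k) (hy k)).2
  have hx_ne {k l} (hkl : k ≠ l) : x k ≠ x l :=
    (diffIndices_eq_pair_of_common_neighbor (hw_ne hkl) (hw_nadj k l)
      (diffIndices_comm.trans (hx k)) (hx l)).1
  have hmem k : x k ∈ ({x 0, y 0} : Set ℕ) := hD 0 ▸ hD k ▸ Set.mem_insert _ _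
  have h1 : x 1 = y 0 := (hmem 1).resolve_left (hx_ne (by decide))
  have h2 : x 2 = y 0 := (hmem 2).resolve_left (hx_ne (by decide))
  exact hx_ne (by decide : (1 : Fin 3) ≠ 2) (h1.trans h2.symm)

/-- shortest path graphs are `K_{2,3}`-free. -/
theorem stmt_5 {V : Type*} (G : SimpleGraph V) (a b : V) (hab : a ≠ b) :
    IsEmpty (completeBipartiteGraph (Fin 2) (Fin 3) ↪g SPG G a b) :=
  stmt_5_general G a b
end

section
/- If a shortest path graph H contains an induced claw K_{1,3}, then H contains an induced 4-cycle that uses two of the edges of that induced claw. -/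
/-! The three leaves of the claw differ from the centre `C` at pairwise distinct levels (two
leaves differing from `C` at the same level would be adjacent), so two of them, `X` and `Y`,
differ from `C` at non-consecutive levels `i` and `j`. Taking `X`'s vertex at level `i` and `Y`'s
vertices elsewhere is still a walk from `a` to `b`, because no edge meets both levels; it has
length `d(a,b)`, hence is a geodesic `D`. It differs from `C` exactly at `i` and `j`, from `Y`
only at `i` and from `X` only at `j`, so `X C Y D` is an induced 4-cycle. -/

open SimpleGraph

variable {V : Type*}

theorem List.isChain_of_forall_exists_isChain_getElem? {α : Type*} {R : α → α → Prop}
    {t : List α}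
    (h : ∀ k, ∃ l : List α, l.IsChain R ∧ t[k]? = l[k]? ∧ t[k + 1]? = l[k + 1]?) :
    t.IsChain R := by
  refine List.isChain_iff_getElem.mpr fun k hk => ?_
  obtain ⟨l, hl, h₀, h₁⟩ := h k
  rw [List.getElem?_eq_getElem (by omega), eq_comm, List.getElem?_eq_some_iff] at h₀ h₁
  obtain ⟨hk₁, h₁⟩ := h₁
  obtain ⟨_, h₀⟩ := h₀
  rw [← h₀, ← h₁]
  exact hl.getElem k hk₁

namespace Geodesic

variable {G : SimpleGraph V} {a b : V}

theorem length_support (U : Geodesic G a b) : U.1.support.length = G.dist a b + 1 := by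
  rw [Walk.length_support, U.2.2]

theorem support_getElem?_zero (U : Geodesic G a b) : U.1.support[0]? = some a := by
  simp

theorem support_getElem?_dist (U : Geodesic G a b) : U.1.support[G.dist a b]? = some b := by
  simp [← U.2.2]

theorem ext_getElem? {U W : Geodesic G a b} (h : ∀ k : ℕ, U.1.support[k]? = W.1.support[k]?) :
    U = W :=
  Subtype.ext (Walk.ext_support (List.ext_getElem? h))

theorem exists_support_eq {t : List V} (hchain : t.IsChain G.Adj) (hhead : t.head? = some a)
    (hlast : t.getLast? = some b) (hlen : t.length = G.dist a b + 1) :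
    ∃ D : Geodesic G a b, D.1.support = t := by
  have hne : t ≠ [] := by rintro rfl; simp at hhead
  let p : G.Walk a b := (Walk.ofSupport t hne hchain).copy
    ((List.head_eq_iff_head?_eq_some hne).mpr hhead)
    ((List.getLast_eq_iff_getLast?_eq_some hne).mpr hlast)
  have hp : p.length = G.dist a b := by simp [p, hlen]
  exact ⟨⟨p, p.isPath_of_length_eq_dist hp, hp⟩, by simp [p]⟩

theorem exists_crossover (X Y : Geodesic G a b) {i j : ℕ} (hij : i + 1 < j ∨ j + 1 < i)
    (hXY : ∀ k, k ≠ i → k ≠ j → X.1.support[k]? = Y.1.support[k]?) :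
    ∃ D : Geodesic G a b, D.1.support[i]? = X.1.support[i]? ∧
      ∀ k, k ≠ i → D.1.support[k]? = Y.1.support[k]? := by
  -- the default `a` never matters: if `i` is out of range, `set` leaves the list unchanged
  set t := Y.1.support.set i (X.1.support.getD i a)
  have htY : ∀ k, k ≠ i → t[k]? = Y.1.support[k]? := fun k hk =>
    List.getElem?_set_ne (Ne.symm hk)
  have hti : t[i]? = X.1.support[i]? := by
    rcases lt_or_ge i (G.dist a b + 1) with hi | hi
    · rw [List.getElem?_set_self (by rw [length_support]; exact hi),
        List.getD_eq_getElem _ _ (by rw [length_support]; exact hi), List.getElem?_eq_getElem]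
    · rw [List.getElem?_eq_none (by rw [List.length_set, length_support]; exact hi),
        List.getElem?_eq_none (by rw [length_support]; exact hi)]
  have htX : ∀ k, k ≠ j → t[k]? = X.1.support[k]? := by
    intro k hk
    rcases eq_or_ne k i with rfl | hki
    · exact hti
    · rw [htY k hki, hXY k hki hk]
  have hchain : t.IsChain G.Adj := by
    refine List.isChain_of_forall_exists_isChain_getElem? fun k => ?_
    by_cases hk : k ≠ i ∧ k + 1 ≠ i
    · exact ⟨_, Y.1.isChain_adj_support, htY k hk.1, htY (k + 1) hk.2⟩
    · exact ⟨_, X.1.isChain_adj_support, htX k (by omega), htX (k + 1) (by omega)⟩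
  have htlen : t.length = G.dist a b + 1 := by rw [List.length_set, length_support]
  have ht_of_eq : ∀ k : ℕ, X.1.support[k]? = Y.1.support[k]? → t[k]? = Y.1.support[k]? := by
    intro k hk
    rcases eq_or_ne k i with rfl | hki
    · rw [hti, hk]
    · exact htY k hki
  have hhead : t.head? = some a := by
    rw [List.head?_eq_getElem?, ht_of_eq 0 (by rw [support_getElem?_zero, support_getElem?_zero]),
      support_getElem?_zero]
  have hlast : t.getLast? = some b := by
    rw [List.getLast?_eq_getElem?, htlen, Nat.add_sub_cancel,
      ht_of_eq _ (by rw [support_getElem?_dist, support_getElem?_dist]), support_getElem?_dist]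
  obtain ⟨D, hD⟩ := exists_support_eq hchain hhead hlast htlen
  exact ⟨D, hD ▸ hti, hD ▸ htY⟩

end Geodesic

section ShortestPathGraph

variable {G : SimpleGraph V} {a b : V}

theorem diffIndices_eq_singleton_iff {U W : Geodesic G a b} {i : ℕ} :
    diffIndices G a b U W = {i} ↔
      U.1.support[i]? ≠ W.1.support[i]? ∧ ∀ k, k ≠ i → U.1.support[k]? = W.1.support[k]? :=
  Set.eq_singleton_iff_unique_mem.trans <| and_congr Iff.rfl <| forall_congr' fun _ => not_imp_comm

theorem spg_adj_iff {U W : Geodesic G a b} :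
    (SPG G a b).Adj U W ↔ ∃ i, diffIndices G a b U W = {i} :=
  exists_congr fun _ => Set.eq_singleton_iff_unique_mem.symm

theorem spg_adj_of_diffIndices_eq_singleton {C L M : Geodesic G a b} {i : ℕ}
    (hL : diffIndices G a b C L = {i}) (hM : diffIndices G a b C M = {i}) (hne : L ≠ M) :
    (SPG G a b).Adj L M := by
  rw [diffIndices_eq_singleton_iff] at hL hM
  have hLM : ∀ k, k ≠ i → L.1.support[k]? = M.1.support[k]? := fun k hk =>
    (hL.2 k hk).symm.trans (hM.2 k hk)
  refine spg_adj_iff.mpr ⟨i, diffIndices_eq_singleton_iff.mpr ⟨fun hi => hne ?_, hLM⟩⟩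
  refine Geodesic.ext_getElem? fun k => ?_
  rcases eq_or_ne k i with rfl | hk
  exacts [hi, hLM k hk]

theorem exists_spg_square {C X Y : Geodesic G a b} {i j : ℕ} (hij : i + 1 < j ∨ j + 1 < i)
    (hX : diffIndices G a b C X = {i}) (hY : diffIndices G a b C Y = {j}) :
    ∃ D : Geodesic G a b, D ≠ C ∧ ¬ (SPG G a b).Adj C D ∧
      (SPG G a b).Adj Y D ∧ (SPG G a b).Adj D X := by
  obtain ⟨hXi, hX⟩ := diffIndices_eq_singleton_iff.mp hX
  obtain ⟨hYj, hY⟩ := diffIndices_eq_singleton_iff.mp hY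
  obtain ⟨D, hDi, hD⟩ :=
    X.exists_crossover Y hij fun k hki hkj => (hX k hki).symm.trans (hY k hkj)
  have hDj : D.1.support[j]? = Y.1.support[j]? := hD j (by omega)
  have hDX : ∀ k, k ≠ j → D.1.support[k]? = X.1.support[k]? := by
    intro k hkj
    rcases eq_or_ne k i with rfl | hki
    · exact hDi
    · rw [hD k hki, ← hY k hkj, hX k hki]
  refine ⟨D, ?_, ?_, ?_, ?_⟩
  · rintro rfl
    exact hXi hDi
  · intro hadj
    obtain ⟨k, hk⟩ := spg_adj_iff.mp hadj
    obtain ⟨-, hCD⟩ := diffIndices_eq_singleton_iff.mp hk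
    have hik : i = k := by_contra fun h => hXi (hDi ▸ hCD i h)
    have hjk : j = k := by_contra fun h => hYj (hDj ▸ hCD j h)
    omega
  · refine spg_adj_iff.mpr ⟨i, diffIndices_eq_singleton_iff.mpr ⟨?_, fun k hk => (hD k hk).symm⟩⟩
    rw [← hY i (by omega), hDi]
    exact hXi
  · refine spg_adj_iff.mpr ⟨j, diffIndices_eq_singleton_iff.mpr ⟨?_, hDX⟩⟩
    rw [hDj, ← hX j (by omega)]
    exact Ne.symm hYj

end ShortestPathGraph

theorem stmt_11_general {V : Type*} (G : SimpleGraph V) (a b : V)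
    (C L₁ L₂ L₃ : Geodesic G a b)
    (h12 : L₁ ≠ L₂) (h13 : L₁ ≠ L₃) (h23 : L₂ ≠ L₃)
    (a1 : (SPG G a b).Adj C L₁) (a2 : (SPG G a b).Adj C L₂) (a3 : (SPG G a b).Adj C L₃)
    (n12 : ¬ (SPG G a b).Adj L₁ L₂) (n13 : ¬ (SPG G a b).Adj L₁ L₃)
    (n23 : ¬ (SPG G a b).Adj L₂ L₃) :
    ∃ X Y D : Geodesic G a b,
      (X = L₁ ∨ X = L₂ ∨ X = L₃) ∧ (Y = L₁ ∨ Y = L₂ ∨ Y = L₃) ∧ X ≠ Y ∧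
      D ≠ C ∧ ¬ (SPG G a b).Adj C D ∧ ¬ (SPG G a b).Adj X Y ∧
      (SPG G a b).Adj X C ∧ (SPG G a b).Adj C Y ∧
      (SPG G a b).Adj Y D ∧ (SPG G a b).Adj D X := by
  obtain ⟨i₁, h₁⟩ := spg_adj_iff.mp a1
  obtain ⟨i₂, h₂⟩ := spg_adj_iff.mp a2
  obtain ⟨i₃, h₃⟩ := spg_adj_iff.mp a3
  have d12 : i₁ ≠ i₂ := by
    rintro rfl; exact n12 (spg_adj_of_diffIndices_eq_singleton h₁ h₂ h12)
  have d13 : i₁ ≠ i₃ := by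
    rintro rfl; exact n13 (spg_adj_of_diffIndices_eq_singleton h₁ h₃ h13)
  have d23 : i₂ ≠ i₃ := by
    rintro rfl; exact n23 (spg_adj_of_diffIndices_eq_singleton h₂ h₃ h23)
  have hfar : (i₁ + 1 < i₂ ∨ i₂ + 1 < i₁) ∨ (i₁ + 1 < i₃ ∨ i₃ + 1 < i₁) ∨
      (i₂ + 1 < i₃ ∨ i₃ + 1 < i₂) := by
    omega
  rcases hfar with hfar | hfar | hfar
  · obtain ⟨D, hDC, hCD, hYD, hDX⟩ := exists_spg_square hfar h₁ h₂
    exact ⟨L₁, L₂, D, by simp, by simp, h12, hDC, hCD, n12, a1.symm, a2, hYD, hDX⟩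
  · obtain ⟨D, hDC, hCD, hYD, hDX⟩ := exists_spg_square hfar h₁ h₃
    exact ⟨L₁, L₃, D, by simp, by simp, h13, hDC, hCD, n13, a1.symm, a3, hYD, hDX⟩
  · obtain ⟨D, hDC, hCD, hYD, hDX⟩ := exists_spg_square hfar h₂ h₃
    exact ⟨L₂, L₃, D, by simp, by simp, h23, hDC, hCD, n23, a2.symm, a3, hYD, hDX⟩

/-- an induced claw in a shortest path graph yields an induced 4-cycle
using two edges of the claw. -/
theorem stmt_11 {V : Type*} (G : SimpleGraph V) (a b : V) (hab : a ≠ b)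
    (C L₁ L₂ L₃ : Geodesic G a b)
    (h12 : L₁ ≠ L₂) (h13 : L₁ ≠ L₃) (h23 : L₂ ≠ L₃)
    (a1 : (SPG G a b).Adj C L₁) (a2 : (SPG G a b).Adj C L₂) (a3 : (SPG G a b).Adj C L₃)
    (n12 : ¬ (SPG G a b).Adj L₁ L₂) (n13 : ¬ (SPG G a b).Adj L₁ L₃)
    (n23 : ¬ (SPG G a b).Adj L₂ L₃) :
    ∃ X Y D : Geodesic G a b,
      (X = L₁ ∨ X = L₂ ∨ X = L₃) ∧ (Y = L₁ ∨ Y = L₂ ∨ Y = L₃) ∧ X ≠ Y ∧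
      D ≠ C ∧ ¬ (SPG G a b).Adj C D ∧ ¬ (SPG G a b).Adj X Y ∧
      (SPG G a b).Adj X C ∧ (SPG G a b).Adj C Y ∧
      (SPG G a b).Adj Y D ∧ (SPG G a b).Adj D X :=
  stmt_11_general G a b C L₁ L₂ L₃ h12 h13 h23 a1 a2 a3 n12 n13 n23
end
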